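/- Let c > 0 be real. On the slit punctured disc Ω, the pair β_c(w) := c·w̄^{c−1}·(1 − w^c)/((1 − |w|^{2c})(1 − w̄^c)) + (1 + w)/((1 − |w|²)(1 + w̄)) and Φ_c(w) := −i·c·w^{c−1}·(1 − |w|²)·(1 + w)(1 − w̄^c)/((1 − |w|^{2c})(1 + w̄)(1 − w^c)), where w̄^c and w̄^{c−1} denote the complex conjugates of w^c and w^{c−1}, satisfies the hyperbolic vortex equations (V1) and (V2) on Ω. (This is the family of singular hyperbolic vortices: for c = 2 it is the standard c₁ = 1 vortex, for c = 5/2 the Forgács–Horváth–Palla c₁ = 3/2 vortex, and in general it has Chern class c₁ = c − 1 and holonomy e^{2πic} around the origin.) -/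

import Mathlib

/-!
The pair comes from the ansatz with super-potential `φ = P ∘ p`, where
`P z = (1 - |z|²) / |1 - z|² = Re ((1 + z) / (1 - z))` is the Poisson kernel and `p w = w^c`.
Because `φ` is positive and harmonic, `ψ = ∂ log φ` solves the Liouville equation
`∂̄ψ = -|ψ|²`; so does `ψ₀ = ∂ log φ₀` for `φ₀ = P (-w)`, for which `|ψ₀|² = (1 - |w|²)⁻²`.
The two explicit factors of the ansatz are `-∂̄ log φ₀` and `i / ψ₀`, i.e. `β = ψ̄ - ψ̄₀` and
`Φ = i ψ / ψ₀`. Then (V1) is the quotient rule for `∂̄ (ψ / ψ₀)`, and (V2) reads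
`(1 - |w|²)² (|ψ₀|² - |ψ|²) = 1 - |ψ|² / |ψ₀|²`.
-/

open Complex ComplexConjugate

noncomputable section

/-- Wirtinger derivative ∂_z f = (1/2)(∂_t f − i ∂_r f). -/
def wdz (f : ℂ → ℂ) (z : ℂ) : ℂ :=
  (2:ℂ)⁻¹ * (fderiv ℝ f z 1 - Complex.I * fderiv ℝ f z Complex.I)

/-- Wirtinger derivative ∂_z̄ f = (1/2)(∂_t f + i ∂_r f). -/
def wdzbar (f : ℂ → ℂ) (z : ℂ) : ℂ :=
  (2:ℂ)⁻¹ * (fderiv ℝ f z 1 + Complex.I * fderiv ℝ f z Complex.I)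

/-- A real-valued function regarded as complex-valued. -/
def cre (φ : ℂ → ℝ) : ℂ → ℂ := fun z => (φ z : ℂ)

/-- ∂_z log φ := (∂_z φ)/φ for positive real φ. -/
def dzlog (φ : ℂ → ℝ) (z : ℂ) : ℂ := wdz (cre φ) z / (φ z : ℂ)

/-- ∂_z̄ log φ := (∂_z̄ φ)/φ for positive real φ. -/
def dzbarlog (φ : ℂ → ℝ) (z : ℂ) : ℂ := wdzbar (cre φ) z / (φ z : ℂ)

/-- Flat Laplacian ∂_t² + ∂_r² on ℂ ≅ ℝ², where z = t + ir. -/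
def lap2 (φ : ℂ → ℝ) (z : ℂ) : ℝ :=
  fderiv ℝ (fun w => fderiv ℝ φ w 1) z 1 +
  fderiv ℝ (fun w => fderiv ℝ φ w Complex.I) z Complex.I

/-- The slit punctured disc: the open unit disc minus the origin and the nonnegative
real axis. -/
def Omega : Set ℂ :=
  {w : ℂ | 0 < ‖w‖ ∧ ‖w‖ < 1 ∧ ¬(w.im = 0 ∧ 0 ≤ w.re)}

/-- The argument normalized to lie in (0, 2π) (on Ω). -/
def argTwoPi (w : ℂ) : ℝ := if 0 < w.arg then w.arg else w.arg + 2 * Real.pi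

/-- The branch of the complex logarithm on Ω with argument in (0, 2π). -/
def Lbr (w : ℂ) : ℂ := (Real.log (‖w‖) : ℂ) + (argTwoPi w : ℂ) * Complex.I

/-- w^c := exp(c·L(w)) for the branch L with argument in (0, 2π). -/
def wpow (c : ℝ) (w : ℂ) : ℂ := Complex.exp ((c : ℂ) * Lbr w)

/-- The super-potential φ_c(w) = (1 − |w|^{2c})/|1 − w^c|². -/
def phiC (c : ℝ) (w : ℂ) : ℝ :=
  (1 - ‖w‖ ^ (2*c)) / Complex.normSq (1 - wpow c w)
/-- The connection coefficient β_c of the singular hyperbolic vortex family. -/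
def beta18 (c : ℝ) (w : ℂ) : ℂ :=
  (c : ℂ) * conj (wpow (c-1) w) * (1 - wpow c w) /
      (((1 - ‖w‖ ^ (2*c) : ℝ) : ℂ) * (1 - conj (wpow c w))) +
    (1 + w) / (((1 - Complex.normSq w : ℝ) : ℂ) * (1 + conj w))

/-- The Higgs field Φ_c of the singular hyperbolic vortex family. -/
def higgs18 (c : ℝ) (w : ℂ) : ℂ :=
  -Complex.I * (c : ℂ) * wpow (c-1) w * ((1 - Complex.normSq w : ℝ) : ℂ) *
      (1 + w) * (1 - conj (wpow c w)) /
    (((1 - ‖w‖ ^ (2*c) : ℝ) : ℂ) * (1 + conj w) * (1 - wpow c w))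

open Filter Topology
open scoped Real

def wirtingerCLM (a b : ℂ) : ℂ →L[ℝ] ℂ :=
  a • ContinuousLinearMap.id ℝ ℂ + b • conjCLE.toContinuousLinearMap

@[simp]
lemma wirtingerCLM_apply (a b h : ℂ) : wirtingerCLM a b h = a * h + b * conj h := by
  simp [wirtingerCLM]

def HasWirtingerAt (f : ℂ → ℂ) (a b w : ℂ) : Prop :=
  HasFDerivAt f (wirtingerCLM a b) w

section Wirtinger

variable {f g : ℂ → ℂ} {a b a' b' w : ℂ}

lemma HasWirtingerAt.wdz_eq (h : HasWirtingerAt f a b w) : wdz f w = a := by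
  simp only [wdz, h.fderiv, wirtingerCLM_apply, map_one, conj_I]
  linear_combination (-(a - b) / 2) * I_sq

lemma HasWirtingerAt.wdzbar_eq (h : HasWirtingerAt f a b w) : wdzbar f w = b := by
  simp only [wdzbar, h.fderiv, wirtingerCLM_apply, map_one, conj_I]
  linear_combination ((a - b) / 2) * I_sq

lemma HasWirtingerAt.congr_bar (h : HasWirtingerAt f a b w) (hb : b = b') :
    HasWirtingerAt f a b' w :=
  hb ▸ h

lemma Filter.EventuallyEq.wdz_eq (h : f =ᶠ[𝓝 w] g) : wdz f w = wdz g w := by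
  simp only [wdz, h.fderiv_eq]

lemma Filter.EventuallyEq.wdzbar_eq (h : f =ᶠ[𝓝 w] g) : wdzbar f w = wdzbar g w := by
  simp only [wdzbar, h.fderiv_eq]

lemma hasWirtingerAt_const (k w : ℂ) : HasWirtingerAt (fun _ => k) 0 0 w :=
  (hasFDerivAt_const (𝕜 := ℝ) k w).congr_fderiv <| by ext h; simp

lemma HasDerivAt.hasWirtingerAt (h : HasDerivAt f a w) : HasWirtingerAt f a 0 w :=
  (h.hasFDerivAt.restrictScalars ℝ).congr_fderiv <| by ext h; simp [mul_comm]

lemma HasWirtingerAt.conj (h : HasWirtingerAt f a b w) :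
    HasWirtingerAt (fun z => conj (f z)) (conj b) (conj a) w :=
  h.star.congr_fderiv <| by ext h; simp; ring

lemma HasWirtingerAt.sub (hf : HasWirtingerAt f a b w) (hg : HasWirtingerAt g a' b' w) :
    HasWirtingerAt (fun z => f z - g z) (a - a') (b - b') w :=
  (HasFDerivAt.sub hf hg).congr_fderiv <| by ext h; simp; ring

lemma HasWirtingerAt.mul (hf : HasWirtingerAt f a b w) (hg : HasWirtingerAt g a' b' w) :
    HasWirtingerAt (fun z => f z * g z) (a * g w + f w * a') (b * g w + f w * b') w :=
  (HasFDerivAt.mul' hf hg).congr_fderiv <| by ext h; simp; ring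

lemma HasWirtingerAt.inv (hf : HasWirtingerAt f a b w) (hw : f w ≠ 0) :
    HasWirtingerAt (fun z => (f z)⁻¹) (-a / f w ^ 2) (-b / f w ^ 2) w :=
  ((hasDerivAt_inv hw).hasFDerivAt.restrictScalars ℝ |>.comp w hf).congr_fderiv <| by
    ext h; simp; ring

lemma HasWirtingerAt.div (hf : HasWirtingerAt f a b w) (hg : HasWirtingerAt g a' b' w)
    (hw : g w ≠ 0) :
    HasWirtingerAt (fun z => f z / g z) ((a * g w - f w * a') / g w ^ 2)
      ((b * g w - f w * b') / g w ^ 2) w := by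
  simp only [div_eq_mul_inv]
  exact (hf.mul (hg.inv hw)).congr_fderiv <| by ext h; simp; field_simp; ring

end Wirtinger

lemma ofReal_one_sub_normSq (z : ℂ) : ((1 - normSq z : ℝ) : ℂ) = 1 - z * conj z := by
  push_cast [mul_conj]
  rfl

lemma one_sub_ne_zero_of_norm_ne_one {z : ℂ} (hz : ‖z‖ ≠ 1) : 1 - z ≠ 0 :=
  sub_ne_zero.2 fun h => hz (h ▸ norm_one)

lemma one_sub_mul_conj_ne_zero {z : ℂ} (hz : ‖z‖ ≠ 1) : 1 - z * conj z ≠ 0 := by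
  rw [mul_conj, normSq_eq_norm_sq]
  exact_mod_cast sub_ne_zero.2 fun h =>
    hz ((pow_eq_one_iff_of_nonneg (norm_nonneg z) two_ne_zero).1 h.symm)

/-- `∂ log (P ∘ p)` for the Poisson kernel `P z = (1 - |z|²) / |1 - z|²`. -/
def poissonLogDeriv (p : ℂ → ℂ) (z : ℂ) : ℂ :=
  deriv p z * (1 - conj (p z)) / ((1 - p z * conj (p z)) * (1 - p z))

lemma exists_hasWirtingerAt_poissonLogDeriv {p : ℂ → ℂ} {w : ℂ} (hp : AnalyticAt ℂ p w)
    (hpw : ‖p w‖ ≠ 1) :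
    ∃ a, HasWirtingerAt (poissonLogDeriv p) a (-(normSq (poissonLogDeriv p w) : ℂ)) w := by
  have h1 : 1 - p w ≠ 0 := one_sub_ne_zero_of_norm_ne_one hpw
  have h1' : 1 - conj (p w) ≠ 0 := one_sub_ne_zero_of_norm_ne_one (by rwa [norm_conj])
  have h2 : 1 - p w * conj (p w) ≠ 0 := one_sub_mul_conj_ne_zero hpw
  have hone := hasWirtingerAt_const 1 w
  have hP := hp.differentiableAt.hasDerivAt.hasWirtingerAt
  have hP' := hp.deriv.differentiableAt.hasDerivAt.hasWirtingerAt
  have h := (hP'.mul (hone.sub hP.conj)).div ((hone.sub (hP.mul hP.conj)).mul (hone.sub hP))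
    (mul_ne_zero h2 h1)
  refine ⟨_, h.congr_bar ?_⟩
  rw [← mul_conj]
  simp only [poissonLogDeriv, map_div₀, map_mul, map_sub, map_one, conj_conj]
  field_simp
  ring

lemma poissonLogDeriv_neg (z : ℂ) :
    poissonLogDeriv (-·) z = -(1 + conj z) / ((1 - z * conj z) * (1 + z)) := by
  simp only [poissonLogDeriv, deriv_neg'', map_neg]
  ring

lemma normSq_poissonLogDeriv_neg_mul_sq {z : ℂ} (hz : ‖z‖ ≠ 1) :
    normSq (poissonLogDeriv (-·) z) * (1 - normSq z) ^ 2 = 1 := by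
  have h1 : normSq (1 + z) ≠ 0 := by
    simpa [sub_neg_eq_add] using one_sub_ne_zero_of_norm_ne_one (z := -z) (by simpa)
  have h2 : 1 - normSq z ≠ 0 := by
    exact_mod_cast ofReal_one_sub_normSq z ▸ one_sub_mul_conj_ne_zero hz
  have hconj : normSq (1 + conj z) = normSq (1 + z) := by
    rw [← normSq_conj, map_add, map_one, conj_conj]
  rw [poissonLogDeriv_neg, ← ofReal_one_sub_normSq]
  simp only [normSq_div, normSq_neg, normSq_mul, hconj, normSq_ofReal]
  field_simp

def IsHyperbolicVortexAt (β Φ : ℂ → ℂ) (w : ℂ) : Prop :=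
  wdzbar Φ w + β w * Φ w = 0 ∧ (1 - normSq w) ^ 2 * (wdz β w).re = 1 - normSq (Φ w)

lemma IsHyperbolicVortexAt.congr {β Φ β' Φ' : ℂ → ℂ} {w : ℂ} (h : IsHyperbolicVortexAt β Φ w)
    (hβ : β' =ᶠ[𝓝 w] β) (hΦ : Φ' =ᶠ[𝓝 w] Φ) : IsHyperbolicVortexAt β' Φ' w := by
  rwa [IsHyperbolicVortexAt, hβ.wdz_eq, hΦ.wdzbar_eq, hβ.eq_of_nhds, hΦ.eq_of_nhds]

def vortexConnection (p : ℂ → ℂ) (z : ℂ) : ℂ :=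
  conj (poissonLogDeriv p z) - conj (poissonLogDeriv (-·) z)

def vortexHiggs (p : ℂ → ℂ) (z : ℂ) : ℂ :=
  I * poissonLogDeriv p z / poissonLogDeriv (-·) z

theorem isHyperbolicVortexAt_of_analyticAt {p : ℂ → ℂ} {w : ℂ} (hp : AnalyticAt ℂ p w)
    (hpw : ‖p w‖ ≠ 1) (hw : ‖w‖ ≠ 1) :
    IsHyperbolicVortexAt (vortexConnection p) (vortexHiggs p) w := by
  obtain ⟨_, hψ⟩ := exists_hasWirtingerAt_poissonLogDeriv hp hpw
  obtain ⟨_, hψ₀⟩ := exists_hasWirtingerAt_poissonLogDeriv (p := (-·)) (analyticAt_id.neg)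
    (by simpa using hw)
  have hnorm := normSq_poissonLogDeriv_neg_mul_sq hw
  have hN₀ : normSq (poissonLogDeriv (-·) w) ≠ 0 := left_ne_zero_of_mul_eq_one hnorm
  have hψ₀ne : poissonLogDeriv (-·) w ≠ 0 := fun h => hN₀ (by simp [h])
  constructor
  · have hΦ : HasWirtingerAt (vortexHiggs p) _ _ w :=
      ((hasWirtingerAt_const I w).mul hψ).div hψ₀ hψ₀ne
    rw [hΦ.wdzbar_eq]
    simp only [vortexConnection, vortexHiggs, ← mul_conj]
    field_simp
    ring
  · have hβ : HasWirtingerAt (vortexConnection p) _ _ w := hψ.conj.sub hψ₀.conj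
    rw [hβ.wdz_eq]
    simp only [vortexHiggs, map_neg, conj_ofReal, sub_re, neg_re, ofReal_re, normSq_div,
      normSq_mul, normSq_I]
    rw [eq_inv_of_mul_eq_one_right hnorm]
    field_simp
    ring

lemma ne_zero_of_neg_mem_slitPlane {w : ℂ} (hw : -w ∈ slitPlane) : w ≠ 0 :=
  neg_ne_zero.1 (slitPlane_ne_zero hw)

lemma neg_preimage_slitPlane_mem_nhds {w : ℂ} (hw : -w ∈ slitPlane) :
    {z : ℂ | -z ∈ slitPlane} ∈ 𝓝 w :=
  (isOpen_slitPlane.preimage continuous_neg).mem_nhds hw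

lemma neg_mem_slitPlane_of_mem_Omega {w : ℂ} (hw : w ∈ Omega) : -w ∈ slitPlane := by
  obtain ⟨-, -, hslit⟩ := hw
  rw [mem_slitPlane_iff, neg_re, neg_im, neg_ne_zero, neg_pos]
  by_contra! h
  exact hslit ⟨h.2, h.1⟩

lemma argTwoPi_eq_arg_neg_add_pi {w : ℂ} (hw : -w ∈ slitPlane) : argTwoPi w = arg (-w) + π := by
  rw [mem_slitPlane_iff, neg_re, neg_im, neg_ne_zero, neg_pos] at hw
  rcases lt_trichotomy w.im 0 with him | him | him
  · rw [argTwoPi, if_neg (arg_neg_iff.2 him).le.not_gt, arg_neg_eq_arg_add_pi_of_im_neg him]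
    ring
  · have hre : w.re < 0 := hw.resolve_right (not_not.2 him)
    rw [argTwoPi, arg_eq_pi_iff.2 ⟨hre, him⟩, if_pos Real.pi_pos,
      arg_eq_zero_iff.2 ⟨by simp [hre.le], by simp [him]⟩, zero_add]
  · have hpos : 0 < w.arg := (arg_nonneg_iff.2 him.le).lt_of_ne fun h =>
      him.ne' (arg_eq_zero_iff.1 h.symm).2
    rw [argTwoPi, if_pos hpos, arg_neg_eq_arg_sub_pi_of_im_pos him]
    ring

lemma Lbr_eq_log_neg_add {w : ℂ} (hw : -w ∈ slitPlane) : Lbr w = log (-w) + π * I := by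
  rw [Lbr, argTwoPi_eq_arg_neg_add_pi hw, log, norm_neg]
  push_cast
  ring

lemma exp_Lbr {w : ℂ} (hw : -w ∈ slitPlane) : exp (Lbr w) = w := by
  rw [Lbr_eq_log_neg_add hw, exp_add, exp_log (slitPlane_ne_zero hw), exp_pi_mul_I]
  ring

lemma wpow_sub_one (c : ℝ) {w : ℂ} (hw : -w ∈ slitPlane) : wpow (c - 1) w = wpow c w / w := by
  rw [eq_div_iff (ne_zero_of_neg_mem_slitPlane hw), wpow, wpow]
  nth_rw 2 [← exp_Lbr hw]
  rw [← exp_add]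
  push_cast
  ring_nf

lemma hasDerivAt_wpow (c : ℝ) {w : ℂ} (hw : -w ∈ slitPlane) :
    HasDerivAt (wpow c) (c * wpow (c - 1) w) w := by
  have hlog : HasDerivAt (fun z => c * (log (-z) + π * I)) (c * ((-w)⁻¹ * -1)) w :=
    (((hasDerivAt_log hw).comp w (hasDerivAt_neg w)).add_const _).const_mul _
  refine hlog.cexp.congr_of_eventuallyEq ?_ |>.congr_deriv ?_
  · filter_upwards [neg_preimage_slitPlane_mem_nhds hw] with z hz
    rw [wpow, Lbr_eq_log_neg_add hz]
  · rw [wpow_sub_one c hw, wpow, Lbr_eq_log_neg_add hw]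
    field_simp

lemma analyticAt_wpow (c : ℝ) {w : ℂ} (hw : -w ∈ slitPlane) : AnalyticAt ℂ (wpow c) w :=
  DifferentiableOn.analyticAt (s := {z | -z ∈ slitPlane})
    (fun _ hz => (hasDerivAt_wpow c hz).differentiableAt.differentiableWithinAt)
    (neg_preimage_slitPlane_mem_nhds hw)

lemma norm_wpow (c : ℝ) {w : ℂ} (hw : w ≠ 0) : ‖wpow c w‖ = ‖w‖ ^ c := by
  rw [wpow, norm_exp, Real.rpow_def_of_pos (norm_pos_iff.2 hw)]
  simp [Lbr, mul_comm]

lemma ofReal_one_sub_norm_rpow_two_mul {c : ℝ} {w : ℂ} (hw : w ≠ 0) :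
    ((1 - ‖w‖ ^ (2 * c) : ℝ) : ℂ) = 1 - wpow c w * conj (wpow c w) := by
  rw [mul_conj, normSq_eq_norm_sq, norm_wpow c hw, ← Real.rpow_natCast, ← Real.rpow_mul
    (norm_nonneg w)]
  push_cast
  ring_nf

lemma beta18_eq_vortexConnection (c : ℝ) {w : ℂ} (hw : -w ∈ slitPlane) :
    beta18 c w = vortexConnection (wpow c) w := by
  rw [beta18, vortexConnection, poissonLogDeriv_neg, poissonLogDeriv,
    (hasDerivAt_wpow c hw).deriv,
    ofReal_one_sub_norm_rpow_two_mul (ne_zero_of_neg_mem_slitPlane hw), ofReal_one_sub_normSq]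
  simp only [map_div₀, map_mul, map_sub, map_add, map_neg, map_one, conj_conj, conj_ofReal]
  ring

lemma higgs18_eq_vortexHiggs (c : ℝ) {w : ℂ} (hw : -w ∈ slitPlane) :
    higgs18 c w = vortexHiggs (wpow c) w := by
  rw [higgs18, vortexHiggs, poissonLogDeriv_neg, poissonLogDeriv,
    (hasDerivAt_wpow c hw).deriv,
    ofReal_one_sub_norm_rpow_two_mul (ne_zero_of_neg_mem_slitPlane hw), ofReal_one_sub_normSq]
  simp only [div_div_eq_mul_div, div_neg, mul_div_assoc', div_mul_eq_mul_div, div_div]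
  ring

theorem singular_vortex_family (c : ℝ) (hc : 0 < c) :
    ∀ w ∈ Omega,
      wdzbar (higgs18 c) w + beta18 c w * higgs18 c w = 0 ∧
      (1 - Complex.normSq w)^2 * (wdz (beta18 c) w).re =
        1 - Complex.normSq (higgs18 c w) := by
  intro w hw
  have hslit := neg_mem_slitPlane_of_mem_Omega hw
  have hpw : ‖wpow c w‖ ≠ 1 := by
    rw [norm_wpow c (ne_zero_of_neg_mem_slitPlane hslit)]
    exact (Real.rpow_lt_one (norm_nonneg w) hw.2.1 hc).ne
  refine (isHyperbolicVortexAt_of_analyticAt (analyticAt_wpow c hslit) hpw hw.2.1.ne).congr ?_ ?_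
  · filter_upwards [neg_preimage_slitPlane_mem_nhds hslit] with z hz
      using beta18_eq_vortexConnection c hz
  · filter_upwards [neg_preimage_slitPlane_mem_nhds hslit] with z hz
      using higgs18_eq_vortexHiggs c hz
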